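/- arXiv:1403.2565 — 5 statements merged into one kernel-verified Lean document; each statement's English description precedes it below -/
import Mathlib

section
/- For the polynomial P(z) = 2k(β - 1/3)z³ + β(1 - 3k)z² + k(β + 2/3), if 0 < k < 1 and β = max(k, 1/3), then P(z) > 0 for all z > 1. -/
theorem cubic_positive (k β z : ℝ) (hk0 : 0 < k) (hk1 : k < 1)
    (hβ : β = max k (1/3)) (hz : 1 < z) :
    0 < 2*k*(β - 1/3)*z^3 + β*(1 - 3*k)*z^2 + k*(β + 2/3) := by
  have hz0 : (0:ℝ) < z := by linarith
  rcases le_total k (1/3) with h | h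
  · rw [hβ, max_eq_right h]
    nlinarith [mul_pos hk0 (pow_pos hz0 2), sq_nonneg (z-1)]
  · rw [hβ, max_eq_left h]
    nlinarith [mul_nonneg (mul_nonneg hk0.le (by linarith : (0:ℝ) ≤ k - 1/3))
      (mul_nonneg (sq_nonneg (z-1)) (by linarith : (0:ℝ) ≤ 2*z+1))]
end

section
/- If 0 < k < 1, β = max(k, 1/3), and y > x > 0 are real numbers, then (2k/3)·(y - x)/n^{2/3} < β·(1 + kσ), where n = y√x and σ = (x + 2y)/n^{2/3} - 3. -/
theorem shear_inequality (x y k β : ℝ) (hx : 0 < x) (hxy : x < y)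
    (hk0 : 0 < k) (hk1 : k < 1) (hβ : β = max k (1/3)) :
    (2*k/3) * (y - x) / (y * Real.sqrt x) ^ ((2:ℝ)/3)
      < β * (1 + k * ((x + 2*y) / (y * Real.sqrt x) ^ ((2:ℝ)/3) - 3)) := by
  have hy : 0 < y := hx.trans hxy
  set m := (y * Real.sqrt x) ^ ((2:ℝ)/3) with hm_def
  have hyx : 0 < y * Real.sqrt x := mul_pos hy (Real.sqrt_pos.2 hx)
  have hm : 0 < m := Real.rpow_pos_of_pos hyx _
  have hβk : k ≤ β := hβ ▸ le_max_left _ _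
  have hβ3 : (1:ℝ)/3 ≤ β := hβ ▸ le_max_right _ _
  -- AM-GM : 3 m ≤ x + 2 y
  have hAM : 3 * m ≤ x + 2 * y := by
    have hval : m = x ^ ((1:ℝ)/3) * y ^ ((1:ℝ)/3) * y ^ ((1:ℝ)/3) := by
      rw [hm_def, Real.mul_rpow hy.le (Real.sqrt_nonneg x), Real.sqrt_eq_rpow,
        ← Real.rpow_mul hx.le, mul_assoc, ← Real.rpow_add hy]
      norm_num [mul_comm]
    have h := Real.geom_mean_le_arith_mean3_weighted (by norm_num : (0:ℝ) ≤ 1/3)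
      (by norm_num : (0:ℝ) ≤ 1/3) (by norm_num : (0:ℝ) ≤ 1/3)
      hx.le hy.le hy.le (by norm_num : (1:ℝ)/3 + 1/3 + 1/3 = 1)
    rw [← hval] at h
    linarith
  rw [div_lt_iff₀ hm]
  have h2 : (x + 2*y) / m * m = x + 2*y := div_mul_cancel₀ _ hm.ne'
  have expand : β * (1 + k * ((x + 2*y) / m - 3)) * m
      = β * m + β * k * ((x + 2*y)/m * m) - 3 * β * k * m := by ring
  rw [expand, h2]
  nlinarith [mul_nonneg (sub_nonneg.2 hβ3) (mul_nonneg hk0.le (by linarith : (0:ℝ) ≤ x + 2*y - 3*m)),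
    mul_nonneg (sub_nonneg.2 hβk) hm.le, mul_pos hk0 hx]
end

section
/- If y > x > 0 and p̂₀(n) ≤ ρ̂₀(n) with p̂₀, ρ̂₀ positive, then 0 < p̂_rad(x,y) implies p̂_rad(x,y)/ρ̂(x,y) < p̂₀(n)/ρ̂₀(n); in particular p̂_rad(x,y) < ρ̂(x,y) (dominant energy condition in the radial direction). -/
theorem dec_radial (k : ℝ) (hk : 0 < k) (ρ₀ p₀ : ℝ → ℝ) (x y : ℝ)
    (hx : 0 < x) (hxy : x < y)
    (hρpos : 0 < ρ₀ (y * Real.sqrt x)) (hppos : 0 < p₀ (y * Real.sqrt x))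
    (hdec : p₀ (y * Real.sqrt x) ≤ ρ₀ (y * Real.sqrt x))
    (hpr : 0 < p₀ (y * Real.sqrt x) * (1 + k * ((x + 2*y) / (y * Real.sqrt x) ^ ((2:ℝ)/3) - 3))
       + ρ₀ (y * Real.sqrt x) * (4*k*(x - y)) / (3 * (y * Real.sqrt x) ^ ((2:ℝ)/3))) :
    (p₀ (y * Real.sqrt x) * (1 + k * ((x + 2*y) / (y * Real.sqrt x) ^ ((2:ℝ)/3) - 3))
       + ρ₀ (y * Real.sqrt x) * (4*k*(x - y)) / (3 * (y * Real.sqrt x) ^ ((2:ℝ)/3)))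
      / (ρ₀ (y * Real.sqrt x) * (1 + k * ((x + 2*y) / (y * Real.sqrt x) ^ ((2:ℝ)/3) - 3)))
      < p₀ (y * Real.sqrt x) / ρ₀ (y * Real.sqrt x) ∧
    (p₀ (y * Real.sqrt x) * (1 + k * ((x + 2*y) / (y * Real.sqrt x) ^ ((2:ℝ)/3) - 3))
       + ρ₀ (y * Real.sqrt x) * (4*k*(x - y)) / (3 * (y * Real.sqrt x) ^ ((2:ℝ)/3)))
      < ρ₀ (y * Real.sqrt x) * (1 + k * ((x + 2*y) / (y * Real.sqrt x) ^ ((2:ℝ)/3) - 3)) := by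
  set n := y * Real.sqrt x with hn
  have hy : 0 < y := hx.trans hxy
  have hnpos : 0 < n := mul_pos hy (Real.sqrt_pos.mpr hx)
  set m := n ^ ((2:ℝ)/3) with hmdef
  have hm : 0 < m := Real.rpow_pos_of_pos hnpos _
  have hm3 : m ^ 3 = y ^ 2 * x := by
    have h1 : m ^ (3:ℕ) = n ^ ((2:ℝ)) := by
      rw [hmdef, ← Real.rpow_natCast (n ^ ((2:ℝ)/3)) 3, ← Real.rpow_mul hnpos.le]
      norm_num
    have h2 : n ^ ((2:ℝ)) = n ^ (2:ℕ) := by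
      rw [← Real.rpow_natCast n 2]; norm_num
    rw [h1, h2, hn]
    have := Real.sq_sqrt hx.le
    ring_nf
    nlinarith [Real.sq_sqrt hx.le]
  -- AM-GM : 3m ≤ x + 2y
  have hamgm : 3 * m ≤ x + 2 * y := by
    have hcube : (3*m)^3 ≤ (x + 2*y)^3 := by nlinarith [sq_nonneg (x - y)]
    have := le_of_pow_le_pow_left₀ (n := 3) (by norm_num) (by linarith : (0:ℝ) ≤ x + 2*y) hcube
    linarith
  set σ := (x + 2*y) / m - 3 with hσdef
  have hσ : 0 ≤ σ := by
    rw [hσdef, sub_nonneg, le_div_iff₀ hm]; linarith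
  have hA : 0 < 1 + k * σ := by positivity
  set p := p₀ n with hp
  set ρ := ρ₀ n with hρ
  have hc : ρ * (4*k*(x - y)) / (3 * m) < 0 := by
    apply div_neg_of_neg_of_pos
    · have : 4*k*(x-y) < 0 := by nlinarith
      exact mul_neg_of_pos_of_neg hρpos this
    · positivity
  have hρA : 0 < ρ * (1 + k * σ) := mul_pos hρpos hA
  constructor
  · rw [div_lt_div_iff₀ hρA hρpos]
    nlinarith [mul_neg_of_neg_of_pos hc hρpos]
  · have hpA : p * (1 + k * σ) ≤ ρ * (1 + k * σ) :=
      mul_le_mul_of_nonneg_right hdec hA.le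
    nlinarith [hc, hpA]
end

section
/- If 0 < k < 1, β = max(k, 1/3), y > x > 0, and p̂₀(n) ≤ (1 - β)ρ̂₀(n) with ρ̂₀(n) > 0, then p̂_tan(x,y) < (p̂₀(n)/ρ̂₀(n) + β)·ρ̂(x,y) ≤ ρ̂(x,y) (dominant energy condition in the tangential direction). -/
theorem dec_tangential (k β : ℝ) (hk0 : 0 < k) (hk1 : k < 1)
    (hβ : β = max k (1/3)) (ρ₀ p₀ : ℝ → ℝ) (x y : ℝ)
    (hx : 0 < x) (hxy : x < y)
    (hρpos : 0 < ρ₀ (y * Real.sqrt x)) (hppos : 0 < p₀ (y * Real.sqrt x))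
    (hdec : p₀ (y * Real.sqrt x) ≤ (1 - β) * ρ₀ (y * Real.sqrt x)) :
    (p₀ (y * Real.sqrt x) * (1 + k * ((x + 2*y) / (y * Real.sqrt x) ^ ((2:ℝ)/3) - 3))
       - ρ₀ (y * Real.sqrt x) * (2*k*(x - y)) / (3 * (y * Real.sqrt x) ^ ((2:ℝ)/3)))
      < (p₀ (y * Real.sqrt x) / ρ₀ (y * Real.sqrt x) + β) *
        (ρ₀ (y * Real.sqrt x) * (1 + k * ((x + 2*y) / (y * Real.sqrt x) ^ ((2:ℝ)/3) - 3))) ∧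
    (p₀ (y * Real.sqrt x) / ρ₀ (y * Real.sqrt x) + β) *
        (ρ₀ (y * Real.sqrt x) * (1 + k * ((x + 2*y) / (y * Real.sqrt x) ^ ((2:ℝ)/3) - 3)))
      ≤ ρ₀ (y * Real.sqrt x) * (1 + k * ((x + 2*y) / (y * Real.sqrt x) ^ ((2:ℝ)/3) - 3)) := by
  have hy : 0 < y := hx.trans hxy
  set n := y * Real.sqrt x with hn_def
  have hn : 0 < n := mul_pos hy (Real.sqrt_pos.mpr hx)
  set m := n ^ ((2:ℝ)/3) with hm_def
  have hm : 0 < m := Real.rpow_pos_of_pos hn _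
  have hm3 : m ^ (3:ℕ) = y ^ 2 * x := by
    have h1 : m ^ (3:ℕ) = n ^ (2:ℕ) := by
      rw [hm_def, ← Real.rpow_natCast (n ^ ((2:ℝ)/3)) 3, ← Real.rpow_mul hn.le,
        show (2:ℝ)/3 * ((3:ℕ):ℝ) = ((2:ℕ):ℝ) by norm_num, Real.rpow_natCast]
    have hsq : Real.sqrt x ^ 2 = x := Real.sq_sqrt hx.le
    rw [h1, hn_def]
    nlinarith [hsq]
  -- AM-GM : 3 m ≤ x + 2 y
  have hamgm : 3 * m ≤ x + 2 * y := by
    have key : 0 ≤ (m - y)^2 * (m + 2*y) :=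
      mul_nonneg (sq_nonneg _) (by positivity)
    have hy2 : 0 < y ^ 2 := by positivity
    nlinarith [mul_pos hy2 hm, sq_nonneg (m - y)]
  set P := p₀ n with hP
  set R := ρ₀ n with hR
  set σ := (x + 2*y) / m - 3 with hσ_def
  have hσ0 : 0 ≤ σ := by
    rw [hσ_def, sub_nonneg, le_div_iff₀ hm]
    linarith
  have hA1 : (1:ℝ) ≤ 1 + k * σ := by nlinarith
  have hA : 0 < R * (1 + k * σ) := mul_pos hρpos (by linarith)
  have hβk : k ≤ β := by rw [hβ]; exact le_max_left _ _
  have hβ3 : 1/3 ≤ β := by rw [hβ]; exact le_max_right _ _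
  constructor
  · -- strict inequality
    have hexpand : (P / R + β) * (R * (1 + k * σ)) =
        P * (1 + k * σ) + β * (R * (1 + k * σ)) := by
      field_simp
    rw [hexpand]
    have hkey : 2*k*(y - x) < β * (1 + k * σ) * (3 * m) := by
      have hexp2 : β * (1 + k * σ) * (3 * m) =
          3 * β * m + 3 * β * k * (x + 2*y - 3*m) := by
        rw [hσ_def]; field_simp
      rw [hexp2]
      rcases le_or_gt k (1/3) with hc | hc
      · have hβe : β = 1/3 := by rw [hβ, max_eq_right hc]
        rw [hβe]
        nlinarith [mul_pos hk0 hx, mul_nonneg (by linarith : (0:ℝ) ≤ 1 - 3*k) hm.le]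
      · have hβe : β = k := by rw [hβ, max_eq_left (by linarith)]
        rw [hβe]
        nlinarith [mul_nonneg (mul_nonneg (by linarith : (0:ℝ) ≤ x + 2*y - 3*m)
            (by linarith : (0:ℝ) ≤ 3*k - 1)) hk0.le, mul_pos hk0 hx]
    have hq : (2*k*(y - x))/(3*m) < β * (1 + k * σ) :=
      (div_lt_iff₀ (by positivity)).mpr hkey
    have hmul : R * ((2*k*(y - x))/(3*m)) < R * (β * (1 + k * σ)) :=
      mul_lt_mul_of_pos_left hq hρpos
    have hE : R * (2*k*(x - y)) / (3 * m) = -(R * ((2*k*(y - x))/(3*m))) := by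
      ring
    have hE2 : R * (β * (1 + k * σ)) = β * (R * (1 + k * σ)) := by ring
    linarith
  · -- second inequality
    have h1 : P / R + β ≤ 1 := by
      have : P / R ≤ 1 - β := (div_le_iff₀ hρpos).mpr (by linarith)
      linarith
    have h2 := mul_le_mul_of_nonneg_right h1 hA.le
    linarith
end

section
/- For John elastic materials with underlying fluid satisfying a linear equation of state p̂₀ = (Γ-1)ρ̂₀ with ρ̂₀(n) = a·n^Γ, a > 0, a pair (x,y) with x, y > 0 satisfies p̂_rad(x,y) = 0 if and only if y = α³x where α > 0 is a root of P(α) = 2k(Γ - 5/3)α³ + (1 - 3k)(Γ - 1)α² + k(Γ + 1/3). -/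
theorem prad_zero_iff_line (k Γ a : ℝ) (hk : 0 < k) (hΓ1 : 1 < Γ) (hΓ2 : Γ ≤ 2)
    (ha : 0 < a) (x y : ℝ) (hx : 0 < x) (hy : 0 < y) :
    (a*(Γ-1)*(y * Real.sqrt x) ^ Γ *
        (1 + k * ((x + 2*y) / (y * Real.sqrt x) ^ ((2:ℝ)/3) - 3))
      + a*(y * Real.sqrt x) ^ Γ * (4*k*(x - y)) / (3 * (y * Real.sqrt x) ^ ((2:ℝ)/3)) = 0)
    ↔ (∃ α : ℝ, 0 < α ∧ y = α^3 * x ∧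
        2*k*(Γ - 5/3)*α^3 + (1 - 3*k)*(Γ - 1)*α^2 + k*(Γ + 1/3) = 0) := by
  have hsx : 0 < Real.sqrt x := Real.sqrt_pos.2 hx
  have hn : 0 < y * Real.sqrt x := mul_pos hy hsx
  set α₀ : ℝ := (y / x) ^ ((1:ℝ)/3) with hα₀def
  have hα₀ : 0 < α₀ := Real.rpow_pos_of_pos (div_pos hy hx) _
  have hα₀3 : α₀ ^ 3 = y / x := by
    rw [hα₀def, ← Real.rpow_natCast ((y/x) ^ ((1:ℝ)/3)) 3,
      ← Real.rpow_mul (div_pos hy hx).le]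
    norm_num
  have hyx : y = α₀ ^ 3 * x := by
    rw [hα₀3]; field_simp
  have hN : 0 < (y * Real.sqrt x) ^ Γ := Real.rpow_pos_of_pos hn _
  have hmpos : 0 < (y * Real.sqrt x) ^ ((2:ℝ)/3) := Real.rpow_pos_of_pos hn _
  have hmx : (y * Real.sqrt x) ^ ((2:ℝ)/3) = α₀ ^ 2 * x := by
    have h1 : ((y * Real.sqrt x) ^ ((2:ℝ)/3)) ^ (3:ℕ) = y ^ 2 * x := by
      rw [← Real.rpow_natCast ((y * Real.sqrt x) ^ ((2:ℝ)/3)) 3,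
        ← Real.rpow_mul hn.le]
      norm_num
      rw [mul_pow, Real.sq_sqrt hx.le]
    have h2 : (α₀ ^ 2 * x) ^ (3:ℕ) = y ^ 2 * x := by
      have : (α₀ ^ 2 * x) ^ (3:ℕ) = (α₀ ^ 3) ^ 2 * x ^ 3 := by ring
      rw [this, hα₀3]
      field_simp
    have hA := hmpos
    have hB : 0 < α₀ ^ 2 * x := mul_pos (pow_pos hα₀ 2) hx
    nlinarith [h1, h2, sq_nonneg ((y * Real.sqrt x) ^ ((2:ℝ)/3) - α₀ ^ 2 * x),
      sq_nonneg ((y * Real.sqrt x) ^ ((2:ℝ)/3) + α₀ ^ 2 * x),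
      mul_pos hA hB]
  have key : a*(Γ-1)*(y * Real.sqrt x) ^ Γ *
        (1 + k * ((x + 2*y) / (y * Real.sqrt x) ^ ((2:ℝ)/3) - 3))
      + a*(y * Real.sqrt x) ^ Γ * (4*k*(x - y)) / (3 * (y * Real.sqrt x) ^ ((2:ℝ)/3))
      = a * (y * Real.sqrt x) ^ Γ / α₀ ^ 2 *
        (2*k*(Γ - 5/3)*α₀^3 + (1 - 3*k)*(Γ - 1)*α₀^2 + k*(Γ + 1/3)) := by
    rw [hmx]
    rw [hyx]
    field_simp
    ring
  rw [key]
  constructor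
  · intro h
    refine ⟨α₀, hα₀, hyx, ?_⟩
    have hc : a * (y * Real.sqrt x) ^ Γ / α₀ ^ 2 ≠ 0 :=
      ne_of_gt (div_pos (mul_pos ha hN) (pow_pos hα₀ 2))
    exact (mul_eq_zero.1 h).resolve_left hc
  · rintro ⟨α, hαpos, hyα, hP⟩
    have hcube : α ^ 3 = α₀ ^ 3 := by
      rw [hα₀3, hyα, mul_div_assoc, div_self hx.ne', mul_one]
    have hαα : α = α₀ := by
      rcases lt_trichotomy α α₀ with h | h | h
      · exact absurd hcube (ne_of_lt (pow_lt_pow_left₀ h hαpos.le (by norm_num)))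
      · exact h
      · exact absurd hcube.symm (ne_of_lt (pow_lt_pow_left₀ h hα₀.le (by norm_num)))
    rw [← hαα, hP, mul_zero]
end
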